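/- Aubin–Nitsche-type bound for the stabilized projection (combining inequality (4.5) with the duality bound, underlying the −2-norm estimate in Lemma 4.1): if f_h ∈ V is a γ-stabilized projection of f ∈ H and v* ∈ V is a γ-stabilized projection of v ∈ H, then for all g, h ∈ V one has |⟨f − f_h, v⟩| ≤ 2 · ( ‖f − g‖ + γ^{1/2}·|g|_j ) · ( ‖v − h‖ + γ^{1/2}·|h|_j ). -/

import Mathlib

/-!
Galerkin orthogonality `⟪f - f_h, q⟫ = γ j(f_h, q)` on `V` turns, for `e = f_h - g`, into the
energy identity `‖e‖² + γ |e|_j² = ⟪f - g, e⟫ - γ j(g, e)`, which bounds both `‖e‖` and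
`√γ |e|_j` by `‖f - g‖ + √γ |g|_j`. Splitting `⟪f - f_h, v⟫ = ⟪f - f_h, v - h⟫ + γ j(f_h, h)` and
applying Cauchy–Schwarz to both terms gives the bound.
-/

open Real

namespace LinearMap.BilinForm

variable {E : Type*} [AddCommGroup E] [Module ℝ E] {B : LinearMap.BilinForm ℝ E}

lemma abs_apply_le_sqrt_mul_sqrt (hs : ∀ x, 0 ≤ B x x) (hB : LinearMap.IsSymm B) (x y : E) :
    |B x y| ≤ √(B x x) * √(B y y) := by
  rw [← sqrt_sq_eq_abs, ← sqrt_mul (hs x)]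
  exact sqrt_le_sqrt (B.apply_sq_le_of_symm hs hB x y)

lemma sqrt_apply_add_le (hs : ∀ x, 0 ≤ B x x) (hB : LinearMap.IsSymm B) (x y : E) :
    √(B (x + y) (x + y)) ≤ √(B x x) + √(B y y) := by
  rw [sqrt_le_iff]
  refine ⟨by positivity, ?_⟩
  have hxy := (abs_apply_le_sqrt_mul_sqrt hs hB x y).trans' (le_abs_self _)
  calc B (x + y) (x + y) = B x x + 2 * B x y + B y y := by
        simp only [map_add, LinearMap.add_apply, ← hB.eq y x, RingHom.id_apply]; ring
    _ ≤ √(B x x) ^ 2 + 2 * (√(B x x) * √(B y y)) + √(B y y) ^ 2 := by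
        rw [sq_sqrt (hs x), sq_sqrt (hs y)]; linarith
    _ = (√(B x x) + √(B y y)) ^ 2 := by ring

lemma abs_mul_apply_le (hs : ∀ x, 0 ≤ B x x) (hB : LinearMap.IsSymm B) {γ : ℝ}
    (hγ : 0 ≤ γ) (x y : E) : |γ * B x y| ≤ (√γ * √(B x x)) * (√γ * √(B y y)) := by
  calc |γ * B x y| = γ * |B x y| := by rw [abs_mul, abs_of_nonneg hγ]
    _ ≤ γ * (√(B x x) * √(B y y)) :=
        mul_le_mul_of_nonneg_left (abs_apply_le_sqrt_mul_sqrt hs hB x y) hγ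
    _ = (√γ * √(B x x)) * (√γ * √(B y y)) := by rw [mul_mul_mul_comm, mul_self_sqrt hγ]

end LinearMap.BilinForm

lemma le_add_of_mul_self_add_mul_self_le {a b A B : ℝ} (hA : 0 ≤ A) (hB : 0 ≤ B)
    (h : a * a + b * b ≤ A * a + B * b) : a ≤ A + B ∧ b ≤ A + B := by
  rcases le_total b a with hba | hab
  · have ha : a ≤ A + B := by nlinarith
    exact ⟨ha, hba.trans ha⟩
  · have hb : b ≤ A + B := by nlinarith
    exact ⟨hab.trans hb, hb⟩

section StabilizedProjection

variable {H : Type*} [NormedAddCommGroup H] [InnerProductSpace ℝ H]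

def IsStabilizedProjection (V : Submodule ℝ H) (j : LinearMap.BilinForm ℝ H) (γ : ℝ)
    (f fh : H) : Prop :=
  fh ∈ V ∧ ∀ q ∈ V, inner ℝ fh q + γ * j fh q = inner ℝ f q

namespace IsStabilizedProjection

variable {V : Submodule ℝ H} {j : LinearMap.BilinForm ℝ H} {γ : ℝ} {f fh g : H}

lemma inner_sub_eq (hfh : IsStabilizedProjection V j γ f fh) {q : H} (hq : q ∈ V) :
    inner ℝ (f - fh) q = γ * j fh q := by
  rw [inner_sub_left, ← hfh.2 q hq]; ring

variable (hs : ∀ x, 0 ≤ j x x) (hj : LinearMap.IsSymm j) (hγ : 0 ≤ γ)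
include hs hj hγ

lemma energy_le (hfh : IsStabilizedProjection V j γ f fh) (hg : g ∈ V) :
    ‖fh - g‖ * ‖fh - g‖ + (√γ * √(j (fh - g) (fh - g))) * (√γ * √(j (fh - g) (fh - g)))
      ≤ ‖f - g‖ * ‖fh - g‖ + (√γ * √(j g g)) * (√γ * √(j (fh - g) (fh - g))) := by
  set e := fh - g
  have hee : inner ℝ e e = inner ℝ (f - g) e - γ * j fh e := by
    rw [← hfh.inner_sub_eq (V.sub_mem hfh.1 hg), ← inner_sub_left, sub_sub_sub_cancel_left]
  have hje : γ * j e e = γ * j fh e - γ * j g e := by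
    simp only [e, map_sub, LinearMap.sub_apply]; ring
  rw [← real_inner_self_eq_norm_mul_norm, mul_mul_mul_comm, mul_self_sqrt hγ,
    mul_self_sqrt (hs e), hee, hje]
  have h1 := real_inner_le_norm (f - g) e
  have h2 := (neg_le_abs _).trans (LinearMap.BilinForm.abs_mul_apply_le hs hj hγ g e)
  linarith

lemma discrete_error_le (hfh : IsStabilizedProjection V j γ f fh) (hg : g ∈ V) :
    ‖fh - g‖ ≤ ‖f - g‖ + √γ * √(j g g) ∧
      √γ * √(j (fh - g) (fh - g)) ≤ ‖f - g‖ + √γ * √(j g g) :=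
  le_add_of_mul_self_add_mul_self_le (norm_nonneg _) (by positivity)
    (hfh.energy_le hs hj hγ hg)

lemma norm_sub_le (hfh : IsStabilizedProjection V j γ f fh) (hg : g ∈ V) :
    ‖f - fh‖ ≤ 2 * (‖f - g‖ + √γ * √(j g g)) := by
  have hgh := norm_sub_le_norm_sub_add_norm_sub f g fh
  rw [norm_sub_rev g fh] at hgh
  have hB : 0 ≤ √γ * √(j g g) := by positivity
  linarith [(hfh.discrete_error_le hs hj hγ hg).1]

lemma sqrt_mul_sqrt_apply_le (hfh : IsStabilizedProjection V j γ f fh) (hg : g ∈ V) :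
    √γ * √(j fh fh) ≤ 2 * (‖f - g‖ + √γ * √(j g g)) := by
  have hfh_le : √γ * √(j fh fh) ≤ √γ * √(j g g) + √γ * √(j (fh - g) (fh - g)) := by
    rw [← mul_add]
    refine mul_le_mul_of_nonneg_left ?_ (sqrt_nonneg γ)
    simpa using LinearMap.BilinForm.sqrt_apply_add_le hs hj g (fh - g)
  linarith [(hfh.discrete_error_le hs hj hγ hg).2, norm_nonneg (f - g)]

lemma abs_inner_le (hfh : IsStabilizedProjection V j γ f fh) {h : H} (hh : h ∈ V) (v : H) :
    |inner ℝ (f - fh) v| ≤ ‖f - fh‖ * ‖v - h‖ + (√γ * √(j fh fh)) * (√γ * √(j h h)) := by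
  have hsplit : inner ℝ (f - fh) v = inner ℝ (f - fh) (v - h) + γ * j fh h := by
    rw [inner_sub_right, hfh.inner_sub_eq hh]; ring
  rw [hsplit]
  exact (abs_add_le _ _).trans (add_le_add (abs_real_inner_le_norm _ _)
    (LinearMap.BilinForm.abs_mul_apply_le hs hj hγ fh h))

end IsStabilizedProjection

end StabilizedProjection

theorem stabilized_projection_aubin_nitsche_general
    (H : Type*) [NormedAddCommGroup H] [InnerProductSpace ℝ H]
    (V : Submodule ℝ H)
    (j : H →ₗ[ℝ] H →ₗ[ℝ] ℝ)
    (hj_symm : ∀ x y : H, j x y = j y x)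
    (hj_pos : ∀ x : H, 0 ≤ j x x)
    (γ : ℝ) (hγ : 0 ≤ γ)
    (f fh : H) (hfh_mem : fh ∈ V)
    (hfh : ∀ q ∈ V, (inner ℝ fh q : ℝ) + γ * j fh q = (inner ℝ f q : ℝ))
    (v : H) :
    ∀ g ∈ V, ∀ h ∈ V,
      |(inner ℝ (f - fh) v : ℝ)|
        ≤ 2 * (‖f - g‖ + Real.sqrt γ * Real.sqrt (j g g))
          * (‖v - h‖ + Real.sqrt γ * Real.sqrt (j h h)) := by
  intro g hg h hh
  have hproj : IsStabilizedProjection V j γ f fh := ⟨hfh_mem, hfh⟩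
  have hj : LinearMap.IsSymm j := ⟨hj_symm⟩
  calc |inner ℝ (f - fh) v|
      ≤ ‖f - fh‖ * ‖v - h‖ + (√γ * √(j fh fh)) * (√γ * √(j h h)) :=
        hproj.abs_inner_le hj_pos hj hγ hh v
    _ ≤ 2 * (‖f - g‖ + √γ * √(j g g)) * ‖v - h‖
          + 2 * (‖f - g‖ + √γ * √(j g g)) * (√γ * √(j h h)) := by
        gcongr ?_ * _ + ?_ * _
        · exact hproj.norm_sub_le hj_pos hj hγ hg
        · exact hproj.sqrt_mul_sqrt_apply_le hj_pos hj hγ hg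
    _ = 2 * (‖f - g‖ + √γ * √(j g g)) * (‖v - h‖ + √γ * √(j h h)) := by ring

/-- Aubin–Nitsche-type bound for the stabilized projection (combining
inequality (4.5) with the duality bound, underlying the −2-norm estimate in
Lemma 4.1): if `f_h ∈ V` is a γ-stabilized projection of `f ∈ H` and `v* ∈ V`
is a γ-stabilized projection of `v ∈ H`, then for all `g, h ∈ V`,
`|⟨f − f_h, v⟩| ≤ 2·(‖f − g‖ + γ^{1/2}·|g|_j)·(‖v − h‖ + γ^{1/2}·|h|_j)`. -/
theorem stabilized_projection_aubin_nitsche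
    (H : Type*) [NormedAddCommGroup H] [InnerProductSpace ℝ H]
    (V : Submodule ℝ H) [FiniteDimensional ℝ V]
    (j : H →ₗ[ℝ] H →ₗ[ℝ] ℝ)
    (hj_symm : ∀ x y : H, j x y = j y x)
    (hj_pos : ∀ x : H, 0 ≤ j x x)
    (γ : ℝ) (hγ : 0 ≤ γ)
    (f fh : H) (hfh_mem : fh ∈ V)
    (hfh : ∀ q ∈ V, (inner ℝ fh q : ℝ) + γ * j fh q = (inner ℝ f q : ℝ))
    (v vs : H) (hvs_mem : vs ∈ V)
    (hvs : ∀ q ∈ V, (inner ℝ vs q : ℝ) + γ * j vs q = (inner ℝ v q : ℝ)) :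
    ∀ g ∈ V, ∀ h ∈ V,
      |(inner ℝ (f - fh) v : ℝ)|
        ≤ 2 * (‖f - g‖ + Real.sqrt γ * Real.sqrt (j g g))
          * (‖v - h‖ + Real.sqrt γ * Real.sqrt (j h h)) :=
  stabilized_projection_aubin_nitsche_general H V j hj_symm hj_pos γ hγ f fh hfh_mem hfh v
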